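/- Let (p_x)_{x∈ℤ} be a ℤ-invariant family of real random variables with E[|p_0|²] < ∞, and let U be uniformly distributed on [0,1) and independent of (p_x). Then the one-dimensional perturbed lattice is class-I hyperuniform: there exists a constant C > 0 such that Var[N_r] ≤ C for all r ≥ 1, where N_r := ∑_{x∈ℤ} 1{ |x + p_x + U| ≤ r }. -/

import Mathlib

open MeasureTheory ProbabilityTheory Filter Set
open scoped ENNReal

/-!
The unperturbed count `#{x : |x + U| ≤ r}` lies within `1` of `2r`. A site whose indicator
changes under the perturbation lies within `|p_x| + 1` of one of the boundary points `±r`, so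
`|N_r - 2r| ≤ 1 + G_r + G_{-r}`, where `G_b` counts the sites `x` with `|x - b| ≤ |p_x| + 1`, and
`Var N_r ≤ E (N_r - 2r)²`. Charging each pair `(x, y)` of counted sites to the one farther
from `b` gives `G_b² ≤ 2 ∑_x 1{|x - b| ≤ |p_x| + 1} (2|x - b| + 1)`; as every `p_x` has the law
of `p_0`, the expectation of the right-hand side is at most `2 E (2|p_0| + 3)²`, uniformly in `b`.
-/

noncomputable def nearCount (Z : ℤ → ℝ) (b : ℝ) : ℝ≥0∞ :=
  ∑' x : ℤ, if |(x : ℝ) - b| ≤ Z x then 1 else 0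

lemma natCast_card_Icc_eq_max (m n : ℤ) :
    ((Finset.Icc m n).card : ℝ) = max ((n + 1 - m : ℤ) : ℝ) 0 := by
  rw [Int.card_Icc, ← Int.cast_natCast, Int.toNat_eq_max]
  push_cast
  rfl

lemma nearCount_const (z b : ℝ) :
    nearCount (fun _ => z) b = (Finset.Icc ⌈b - z⌉ ⌊b + z⌋).card := by
  have hmem : ∀ x : ℤ, |(x : ℝ) - b| ≤ z ↔ x ∈ Finset.Icc ⌈b - z⌉ ⌊b + z⌋ := by
    intro x
    rw [Finset.mem_Icc, Int.ceil_le, Int.le_floor, abs_sub_le_iff]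
    constructor <;> rintro ⟨h₁, h₂⟩ <;> constructor <;> linarith
  simp_rw [nearCount, hmem]
  rw [tsum_eq_sum (s := Finset.Icc ⌈b - z⌉ ⌊b + z⌋) (fun x hx => if_neg hx), Finset.sum_ite_mem,
    Finset.inter_self, Finset.sum_const, nsmul_one]

lemma nearCount_const_le (z b : ℝ) : nearCount (fun _ => z) b ≤ ENNReal.ofReal (2 * z + 1) := by
  rw [nearCount_const, ← ENNReal.ofReal_natCast, natCast_card_Icc_eq_max]
  have h₁ := Int.floor_le (b + z)
  have h₂ := Int.le_ceil (b - z)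
  rcases le_total ((⌊b + z⌋ + 1 - ⌈b - z⌉ : ℤ) : ℝ) 0 with h | h
  · rw [max_eq_right h, ENNReal.ofReal_zero]
    exact zero_le
  · rw [max_eq_left h]
    apply ENNReal.ofReal_le_ofReal
    push_cast
    linarith

lemma abs_toReal_nearCount_const_sub_le {z : ℝ} (hz : 0 ≤ z) (b : ℝ) :
    |(nearCount (fun _ => z) b).toReal - 2 * z| ≤ 1 := by
  rw [nearCount_const, ENNReal.toReal_natCast, natCast_card_Icc_eq_max]
  have h₁ := Int.floor_le (b + z)
  have h₂ := Int.le_ceil (b - z)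
  have h₃ := Int.lt_floor_add_one (b + z)
  have h₄ := Int.ceil_lt_add_one (b - z)
  have hle : ⌈b - z⌉ ≤ ⌊b + z⌋ + 1 :=
    (Int.ceil_le_floor_add_one _).trans (by gcongr; linarith)
  rw [max_eq_left (by exact_mod_cast (by omega : (0 : ℤ) ≤ ⌊b + z⌋ + 1 - ⌈b - z⌉)), abs_le]
  push_cast
  constructor <;> linarith

lemma sq_tsum_le_two_mul_tsum_mul_tsum_ite_le {ι : Type*} (f : ι → ℝ≥0∞) (hf : ∀ i, f i ≤ 1)
    (d : ι → ℝ) :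
    (∑' i, f i) ^ 2 ≤ 2 * ∑' i, f i * ∑' j, if d j ≤ d i then 1 else 0 := by
  have hpair : ∀ i j, f i * f j ≤
      f i * (if d j ≤ d i then 1 else 0) + f j * (if d i ≤ d j then 1 else 0) := by
    intro i j
    rcases le_total (d j) (d i) with h | h
    · rw [if_pos h]
      exact (mul_le_mul_right (hf j) _).trans (by rw [mul_one]; exact le_self_add)
    · rw [if_pos h]
      exact (mul_le_mul_left (hf i) _).trans (by rw [one_mul, mul_one]; exact le_add_self)
  calc (∑' i, f i) ^ 2 = ∑' i, ∑' j, f i * f j := by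
        simp_rw [sq, ← ENNReal.tsum_mul_right, ← ENNReal.tsum_mul_left]
    _ ≤ ∑' i, ∑' j, (f i * (if d j ≤ d i then 1 else 0) + f j * (if d i ≤ d j then 1 else 0)) :=
        ENNReal.tsum_le_tsum fun i => ENNReal.tsum_le_tsum fun j => hpair i j
    _ = 2 * ∑' i, f i * ∑' j, if d j ≤ d i then 1 else 0 := by
        simp_rw [ENNReal.tsum_add, ENNReal.tsum_mul_left]
        rw [ENNReal.tsum_comm (f := fun i j => f j * if d i ≤ d j then (1 : ℝ≥0∞) else 0)]
        simp_rw [ENNReal.tsum_mul_left]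
        exact (two_mul _).symm

lemma sq_nearCount_le (Z : ℤ → ℝ) (b : ℝ) :
    nearCount Z b ^ 2 ≤ 2 * ∑' x : ℤ,
      (if |(x : ℝ) - b| ≤ Z x then 1 else 0) * ENNReal.ofReal (2 * |(x : ℝ) - b| + 1) := by
  refine (sq_tsum_le_two_mul_tsum_mul_tsum_ite_le _ (fun x => by split_ifs <;> simp)
    (fun x : ℤ => |(x : ℝ) - b|)).trans ?_
  gcongr with x
  exact nearCount_const_le _ b

lemma tsum_ite_abs_sub_le_mul_le (z b : ℝ) :
    ∑' x : ℤ, (if |(x : ℝ) - b| ≤ z then 1 else 0) * ENNReal.ofReal (2 * |(x : ℝ) - b| + 1) ≤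
      ENNReal.ofReal (2 * z + 1) ^ 2 := by
  calc _ ≤ ∑' x : ℤ, (if |(x : ℝ) - b| ≤ z then 1 else 0) * ENNReal.ofReal (2 * z + 1) :=
        ENNReal.tsum_le_tsum fun x => by
          split_ifs with h
          · rw [one_mul, one_mul]
            gcongr
          · simp
    _ = nearCount (fun _ => z) b * ENNReal.ofReal (2 * z + 1) := ENNReal.tsum_mul_right
    _ ≤ ENNReal.ofReal (2 * z + 1) ^ 2 := by
        rw [sq]
        gcongr
        exact nearCount_const_le z b

lemma abs_sub_le_or_abs_add_le_of_not_iff {w q r : ℝ} (h : ¬(|w + q| ≤ r ↔ |w| ≤ r)) :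
    |w - r| ≤ |q| ∨ |w + r| ≤ |q| := by
  grind [abs_le, le_abs]

lemma abs_sub_le_or_abs_add_le_of_not_iff_of_mem_Ico {u : ℝ} (hu : u ∈ Ico (0 : ℝ) 1) {x : ℤ}
    {q r : ℝ} (h : ¬(|x + q + u| ≤ r ↔ |x + u| ≤ r)) :
    |(x : ℝ) - r| ≤ |q| + 1 ∨ |(x : ℝ) + r| ≤ |q| + 1 := by
  rw [add_right_comm] at h
  have hu' : |u| ≤ 1 := by rw [abs_le]; constructor <;> linarith [hu.1, hu.2]
  rcases abs_sub_le_or_abs_add_le_of_not_iff h with h' | h'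
  · left
    calc |(x : ℝ) - r| ≤ |(x : ℝ) + u - r| + |u| := by
          simpa [add_sub_right_comm] using abs_add_le ((x : ℝ) + u - r) (-u)
      _ ≤ |q| + 1 := add_le_add h' hu'
  · right
    calc |(x : ℝ) + r| ≤ |(x : ℝ) + u + r| + |u| := by
          simpa [add_right_comm _ u r] using abs_add_le ((x : ℝ) + u + r) (-u)
      _ ≤ |q| + 1 := add_le_add h' hu'

lemma ite_le_ite_add_ite_add_ite {P Q R S : Prop} [Decidable P] [Decidable Q] [Decidable R]
    [Decidable S] (h : ¬(P ↔ Q) → R ∨ S) :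
    (if P then (1 : ℝ≥0∞) else 0) ≤
      (if Q then 1 else 0) + ((if R then 1 else 0) + (if S then 1 else 0)) := by
  split_ifs <;> simp_all

noncomputable def boundaryCount (q : ℤ → ℝ) (r : ℝ) : ℝ≥0∞ :=
  nearCount (fun x => |q x| + 1) r + nearCount (fun x => |q x| + 1) (-r)

lemma tsum_ite_abs_add_add_le {u : ℝ} (hu : u ∈ Ico (0 : ℝ) 1) (q : ℤ → ℝ) (r : ℝ) :
    ∑' x : ℤ, (if |x + q x + u| ≤ r then 1 else 0) ≤
      nearCount (fun _ => r) (-u) + boundaryCount q r := by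
  simp_rw [boundaryCount, nearCount, ← ENNReal.tsum_add, sub_neg_eq_add]
  exact ENNReal.tsum_le_tsum fun x =>
    ite_le_ite_add_ite_add_ite (abs_sub_le_or_abs_add_le_of_not_iff_of_mem_Ico hu)

lemma nearCount_le_tsum_ite_abs_add_add {u : ℝ} (hu : u ∈ Ico (0 : ℝ) 1) (q : ℤ → ℝ) (r : ℝ) :
    nearCount (fun _ => r) (-u) ≤
      ∑' x : ℤ, (if |x + q x + u| ≤ r then 1 else 0) + boundaryCount q r := by
  simp_rw [boundaryCount, nearCount, ← ENNReal.tsum_add, sub_neg_eq_add]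
  exact ENNReal.tsum_le_tsum fun x => ite_le_ite_add_ite_add_ite fun h =>
    abs_sub_le_or_abs_add_le_of_not_iff_of_mem_Ico hu (mt Iff.symm h)

lemma enorm_toReal_sub_le_of_le_add {n d w : ℝ≥0∞} {c : ℝ} (hd : d ≠ ⊤) (h₁ : n ≤ d + w)
    (h₂ : d ≤ n + w) (hc : |d.toReal - c| ≤ 1) : ‖n.toReal - c‖ₑ ≤ w + 1 := by
  rcases eq_or_ne w ⊤ with rfl | hw
  · simp
  have hn : n ≠ ⊤ := ne_top_of_le_ne_top (ENNReal.add_ne_top.2 ⟨hd, hw⟩) h₁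
  have h₁' : n.toReal ≤ d.toReal + w.toReal := by
    rw [← ENNReal.toReal_add hd hw]
    exact ENNReal.toReal_mono (ENNReal.add_ne_top.2 ⟨hd, hw⟩) h₁
  have h₂' : d.toReal ≤ n.toReal + w.toReal := by
    rw [← ENNReal.toReal_add hn hw]
    exact ENNReal.toReal_mono (ENNReal.add_ne_top.2 ⟨hn, hw⟩) h₂
  rw [Real.enorm_eq_ofReal_abs, ← ENNReal.ofReal_toReal hw, ← ENNReal.ofReal_one,
    ← ENNReal.ofReal_add ENNReal.toReal_nonneg zero_le_one]
  apply ENNReal.ofReal_le_ofReal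
  rw [abs_le] at hc ⊢
  constructor <;> linarith [hc.1, hc.2]

-- Both sides are `0` when the count is infinite.
lemma tsum_ite_one_eq_toReal {ι : Type*} (P : ι → Prop) [DecidablePred P] :
    ∑' i, (if P i then (1 : ℝ) else 0) = (∑' i, if P i then (1 : ℝ≥0∞) else 0).toReal := by
  rw [ENNReal.tsum_toReal_eq fun i => by split_ifs <;> simp]
  congr 1 with i
  split_ifs <;> simp

lemma enorm_tsum_ite_abs_add_add_sub_le {u : ℝ} (hu : u ∈ Ico (0 : ℝ) 1) (q : ℤ → ℝ) {r : ℝ}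
    (hr : 0 ≤ r) :
    ‖(∑' x : ℤ, if |x + q x + u| ≤ r then (1 : ℝ) else 0) - 2 * r‖ₑ ≤ boundaryCount q r + 1 := by
  rw [tsum_ite_one_eq_toReal]
  exact enorm_toReal_sub_le_of_le_add
    ((nearCount_const_le r (-u)).trans_lt ENNReal.ofReal_lt_top).ne
    (tsum_ite_abs_add_add_le hu q r) (nearCount_le_tsum_ite_abs_add_add hu q r)
    (abs_toReal_nearCount_const_sub_le hr (-u))

lemma ENNReal.add_sq_le (a b : ℝ≥0∞) : (a + b) ^ 2 ≤ 2 * (a ^ 2 + b ^ 2) := by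
  have h := ENNReal.rpow_add_le_mul_rpow_add_rpow a b one_le_two
  norm_num [ENNReal.rpow_two] at h
  exact h

lemma identDistrib_of_map_shift_eq {ι α Ω : Type*} [AddZeroClass ι] [MeasurableSpace α]
    [MeasurableSpace Ω] {μ : Measure Ω} {p : ι → Ω → α} (hp : ∀ x, Measurable (p x))
    (hinv : ∀ z, μ.map (fun ω x => p (x + z) ω) = μ.map (fun ω x => p x ω)) (z : ι) :
    IdentDistrib (p z) (p 0) μ μ := by
  have hfam : IdentDistrib (fun ω x => p (x + z) ω) (fun ω x => p x ω) μ μ :=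
    ⟨(measurable_pi_lambda _ fun x => hp _).aemeasurable,
      (measurable_pi_lambda _ hp).aemeasurable, hinv z⟩
  simpa [Function.comp_def] using hfam.comp (measurable_pi_apply 0)

section Moments

variable {Ω : Type*} [MeasurableSpace Ω] {μ : Measure Ω}

lemma evariance_le_lintegral_enorm_sub_sq [IsProbabilityMeasure μ] {X : Ω → ℝ}
    (hX : AEStronglyMeasurable X μ) (c : ℝ) :
    evariance X μ ≤ ∫⁻ ω, ‖X ω - c‖ₑ ^ 2 ∂μ := by
  have hY : AEStronglyMeasurable (fun ω => X ω - c) μ := hX.sub aestronglyMeasurable_const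
  have hle : evariance (fun ω => X ω - c) μ ≤ ∫⁻ ω, ‖X ω - c‖ₑ ^ 2 ∂μ :=
    (evariance_def' hY).le.trans tsub_le_self
  by_cases hL2 : MemLp X 2 μ
  · rwa [← ofReal_variance hL2, ← variance_sub_const hX c,
      ofReal_variance (X := fun ω => X ω - c) (hL2.sub (memLp_const c))]
  · have hL2' : ¬MemLp (fun ω => X ω - c) 2 μ := fun h => hL2 (by
      simpa [Pi.add_def] using h.add (memLp_const c))
    rw [evariance_eq_top hY hL2', top_le_iff] at hle
    rw [hle]
    exact le_top

lemma MeasureTheory.MemLp.lintegral_ofReal_sq_lt_top {X : Ω → ℝ} (hX : MemLp X 2 μ) :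
    ∫⁻ ω, ENNReal.ofReal (X ω) ^ 2 ∂μ < ⊤ :=
  calc ∫⁻ ω, ENNReal.ofReal (X ω) ^ 2 ∂μ ≤ ∫⁻ ω, ‖X ω ^ 2‖ₑ ∂μ :=
        lintegral_mono fun ω => by rw [enorm_pow]; gcongr; exact Real.ofReal_le_enorm _
    _ < ⊤ := hX.integrable_sq.hasFiniteIntegral

lemma measurable_nearCount {Z : ℤ → Ω → ℝ} (hZ : ∀ x, Measurable (Z x)) (b : ℝ) :
    Measurable fun ω => nearCount (fun x => Z x ω) b :=
  Measurable.tsum fun _ =>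
    Measurable.ite (measurableSet_le measurable_const (hZ _)) measurable_const measurable_const

lemma lintegral_sq_nearCount_le {Z : ℤ → Ω → ℝ} (hZ : ∀ x, IdentDistrib (Z x) (Z 0) μ μ)
    (b : ℝ) :
    ∫⁻ ω, nearCount (fun x => Z x ω) b ^ 2 ∂μ ≤
      2 * ∫⁻ ω, ENNReal.ofReal (2 * Z 0 ω + 1) ^ 2 ∂μ := by
  set g : ℤ → ℝ → ℝ≥0∞ := fun x t =>
    (if |(x : ℝ) - b| ≤ t then 1 else 0) * ENNReal.ofReal (2 * |(x : ℝ) - b| + 1)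
  have hg : ∀ x, Measurable (g x) := fun x =>
    (Measurable.ite measurableSet_Ici measurable_const measurable_const).mul_const _
  calc ∫⁻ ω, nearCount (fun x => Z x ω) b ^ 2 ∂μ ≤ ∫⁻ ω, 2 * ∑' x, g x (Z x ω) ∂μ :=
        lintegral_mono fun ω => sq_nearCount_le _ b
    _ = 2 * ∑' x, ∫⁻ ω, g x (Z x ω) ∂μ := by
        rw [lintegral_const_mul' _ _ ENNReal.ofNat_ne_top]
        exact congrArg _ (lintegral_tsum fun x => (hg x).comp_aemeasurable (hZ x).aemeasurable_fst)
    _ = 2 * ∑' x, ∫⁻ ω, g x (Z 0 ω) ∂μ :=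
        congrArg _ (tsum_congr fun x => ((hZ x).comp (hg x)).lintegral_eq)
    _ = 2 * ∫⁻ ω, ∑' x, g x (Z 0 ω) ∂μ :=
        congrArg _ (lintegral_tsum fun x => (hg x).comp_aemeasurable (hZ 0).aemeasurable_fst).symm
    _ ≤ 2 * ∫⁻ ω, ENNReal.ofReal (2 * Z 0 ω + 1) ^ 2 ∂μ := by
        gcongr with ω
        exact tsum_ite_abs_sub_le_mul_le _ b

lemma lintegral_sq_boundaryCount_add_one_le [IsProbabilityMeasure μ] {q : ℤ → Ω → ℝ}
    (hq : ∀ x, Measurable (q x)) (hident : ∀ x, IdentDistrib (q x) (q 0) μ μ) (r : ℝ) :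
    ∫⁻ ω, (boundaryCount (fun x => q x ω) r + 1) ^ 2 ∂μ ≤
      16 * ∫⁻ ω, ENNReal.ofReal (2 * (|q 0 ω| + 1) + 1) ^ 2 ∂μ + 2 := by
  set Z : ℤ → Ω → ℝ := fun x ω => |q x ω| + 1
  have hZ : ∀ x, Measurable (Z x) := fun x => (hq x).abs.add_const 1
  have hZident : ∀ x, IdentDistrib (Z x) (Z 0) μ μ := fun x =>
    (hident x).comp (measurable_abs.add_const 1)
  set a : ℝ → Ω → ℝ≥0∞ := fun b ω => nearCount (fun x => Z x ω) b
  have ha : ∀ b, Measurable fun ω => a b ω ^ 2 := fun b => (measurable_nearCount hZ b).pow_const 2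
  calc ∫⁻ ω, (boundaryCount (fun x => q x ω) r + 1) ^ 2 ∂μ
      ≤ ∫⁻ ω, (4 * a r ω ^ 2 + 4 * a (-r) ω ^ 2 + 2) ∂μ := by
        refine lintegral_mono fun ω => ?_
        calc (a r ω + a (-r) ω + 1) ^ 2 ≤ 2 * ((a r ω + a (-r) ω) ^ 2 + 1 ^ 2) :=
              ENNReal.add_sq_le _ _
          _ ≤ 2 * (2 * (a r ω ^ 2 + a (-r) ω ^ 2) + 1 ^ 2) := by
              gcongr
              exact ENNReal.add_sq_le _ _
          _ = 4 * a r ω ^ 2 + 4 * a (-r) ω ^ 2 + 2 := by ring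
    _ = 4 * ∫⁻ ω, a r ω ^ 2 ∂μ + 4 * ∫⁻ ω, a (-r) ω ^ 2 ∂μ + 2 := by
        rw [lintegral_add_right _ measurable_const, lintegral_add_left ((ha r).const_mul 4),
          lintegral_const_mul _ (ha r), lintegral_const_mul _ (ha (-r)), lintegral_const,
          measure_univ, mul_one]
    _ ≤ 4 * (2 * ∫⁻ ω, ENNReal.ofReal (2 * Z 0 ω + 1) ^ 2 ∂μ) +
          4 * (2 * ∫⁻ ω, ENNReal.ofReal (2 * Z 0 ω + 1) ^ 2 ∂μ) + 2 := by
        gcongr <;> exact lintegral_sq_nearCount_le hZident _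
    _ = 16 * ∫⁻ ω, ENNReal.ofReal (2 * (|q 0 ω| + 1) + 1) ^ 2 ∂μ + 2 := by ring

end Moments

theorem perturbed_lattice_dim_one_classI_of_finite_second_moment_general
    {Ω : Type} [MeasureSpace Ω] [IsProbabilityMeasure (ℙ : Measure Ω)]
    (p : ℤ → Ω → ℝ)
    (hpm : ∀ x, Measurable (p x))
    (hinv : ∀ z : ℤ,
      Measure.map (fun ω => fun x : ℤ => p (x + z) ω) (ℙ : Measure Ω)
        = Measure.map (fun ω => fun x : ℤ => p x ω) (ℙ : Measure Ω))
    (hmom : Integrable (fun ω => |p 0 ω| ^ 2) (ℙ : Measure Ω))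
    (U : Ω → ℝ) (hUm : Measurable U)
    (hU : Measure.map U (ℙ : Measure Ω) = volume.restrict (Set.Ico (0:ℝ) 1)) :
    ∃ C : ℝ, 0 < C ∧ ∀ r : ℝ, 1 ≤ r →
      evariance (fun ω => ∑' x : ℤ,
          (if |(x : ℝ) + p x ω + U ω| ≤ r then (1 : ℝ) else 0)) (ℙ : Measure Ω)
        ≤ ENNReal.ofReal C := by
  have hU01 : ∀ᵐ ω, U ω ∈ Ico (0 : ℝ) 1 :=
    ae_of_ae_map hUm.aemeasurable (by rw [hU]; exact ae_restrict_mem measurableSet_Ico)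
  have hp0 : MemLp (p 0) 2 :=
    (memLp_two_iff_integrable_sq (hpm 0).aestronglyMeasurable).2 (by simpa using hmom)
  have hZ : MemLp (fun ω => 2 * (|p 0 ω| + 1) + 1) 2 :=
    ((hp0.abs.add (memLp_const 1)).const_mul 2).add (memLp_const 1)
  set B := 16 * ∫⁻ ω, ENNReal.ofReal (2 * (|p 0 ω| + 1) + 1) ^ 2 ∂ℙ + 2
  have hB : B ≠ ⊤ := by
    have := hZ.lintegral_ofReal_sq_lt_top
    finiteness
  refine ⟨B.toReal + 1, by positivity, fun r hr => ?_⟩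
  have hN : Measurable fun ω => ∑' x : ℤ, if |(x : ℝ) + p x ω + U ω| ≤ r then (1 : ℝ) else 0 :=
    Measurable.tsum fun x => Measurable.ite (measurableSet_le (by fun_prop) measurable_const)
      measurable_const measurable_const
  calc _ ≤ ∫⁻ ω, ‖(∑' x : ℤ, if |(x : ℝ) + p x ω + U ω| ≤ r then (1 : ℝ) else 0) - 2 * r‖ₑ ^ 2 :=
        evariance_le_lintegral_enorm_sub_sq hN.aestronglyMeasurable _
    _ ≤ ∫⁻ ω, (boundaryCount (fun x => p x ω) r + 1) ^ 2 :=
        lintegral_mono_ae <| hU01.mono fun ω hω => by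
          gcongr
          exact enorm_tsum_ite_abs_add_add_sub_le hω _ (by linarith)
    _ ≤ B := lintegral_sq_boundaryCount_add_one_le hpm (identDistrib_of_map_shift_eq hpm hinv) r
    _ ≤ ENNReal.ofReal (B.toReal + 1) := by
        rw [ENNReal.ofReal_add ENNReal.toReal_nonneg zero_le_one, ENNReal.ofReal_toReal hB]
        exact le_self_add

/-- In dimension 1, if the ℤ-invariant perturbations have a finite second
moment, then the perturbed lattice is class-I hyperuniform: the number variance `Var[N_r]`
stays bounded as `r → ∞`. -/
theorem perturbed_lattice_dim_one_classI_of_finite_second_moment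
    {Ω : Type} [MeasureSpace Ω] [IsProbabilityMeasure (ℙ : Measure Ω)]
    (p : ℤ → Ω → ℝ)
    (hpm : ∀ x, Measurable (p x))
    (hinv : ∀ z : ℤ,
      Measure.map (fun ω => fun x : ℤ => p (x + z) ω) (ℙ : Measure Ω)
        = Measure.map (fun ω => fun x : ℤ => p x ω) (ℙ : Measure Ω))
    (hmom : Integrable (fun ω => |p 0 ω| ^ 2) (ℙ : Measure Ω))
    (U : Ω → ℝ) (hUm : Measurable U)
    (hU : Measure.map U (ℙ : Measure Ω) = volume.restrict (Set.Ico (0:ℝ) 1))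
    (hUindep : IndepFun U (fun ω => fun x : ℤ => p x ω) (ℙ : Measure Ω)) :
    ∃ C : ℝ, 0 < C ∧ ∀ r : ℝ, 1 ≤ r →
      evariance (fun ω => ∑' x : ℤ,
          (if |(x : ℝ) + p x ω + U ω| ≤ r then (1 : ℝ) else 0)) (ℙ : Measure Ω)
        ≤ ENNReal.ofReal C :=
  perturbed_lattice_dim_one_classI_of_finite_second_moment_general p hpm hinv hmom U hUm hU
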